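/- arXiv:2111.13026 — 8 statements merged into one kernel-verified Lean document; each statement's English description precedes it below -/
import Mathlib

section
/- Let K ≥ 1 and T ≥ 1 be integers. For each j ∈ {1,…,K} let f_j : ℕ → [0,1] be nondecreasing and let F_j(n) = Σ_{s=1}^n f_j(s) be the cumulative fidelity reward. Let μ_1,…,μ_K ∈ [0,1]. Then for every vector of counts N_1,…,N_K ∈ ℕ with Σ_{j=1}^K N_j = T, one has Σ_{j=1}^K (N_j·μ_j + F_j(N_j)) ≤ T · max_{1≤j≤K} (μ_j + F_j(T)/T). In particular, in the stochastic loyalty-points model with increasing fidelity rewards, a single-arm strategy maximizes the pseudo cumulative reward over all sequences of arm pulls. -/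
/-!
Since `f_j` is nondecreasing, the running average `F_j(n)/n` is nondecreasing in `n`, so an arm
pulled `N_j ≤ T` times earns at most `N_j (μ_j + F_j(T)/T) ≤ N_j · max_i (μ_i + F_i(T)/T)`;
summing over the arms gives the bound, as `∑ N_j = T`.
-/

/-- Cumulative fidelity reward `F(n) = ∑_{s=1}^n f(s)`. -/
noncomputable def cumF (f : ℕ → ℝ) (n : ℕ) : ℝ := ∑ s ∈ Finset.Icc 1 n, f s

open Finset

namespace cumF

variable {f : ℕ → ℝ} {n m : ℕ}

lemma eq_sum_Ioc (f : ℕ → ℝ) (n : ℕ) : cumF f n = ∑ s ∈ Ioc 0 n, f s := by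
  rw [cumF, ← Icc_add_one_left_eq_Ioc, zero_add]

lemma add_sum_Ioc (f : ℕ → ℝ) (h : n ≤ m) : cumF f n + ∑ s ∈ Ioc n m, f s = cumF f m := by
  rw [eq_sum_Ioc, eq_sum_Ioc, sum_Ioc_consecutive _ n.zero_le h]

lemma le_mul_of_monotone (hf : Monotone f) (n : ℕ) : cumF f n ≤ n * f n := by
  simpa [eq_sum_Ioc] using sum_le_card_nsmul (Ioc 0 n) f (f n)
    fun s hs ↦ hf (mem_Ioc.mp hs).2

lemma sub_mul_le_sum_Ioc_of_monotone (hf : Monotone f) (h : n ≤ m) :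
    ((m : ℝ) - n) * f n ≤ ∑ s ∈ Ioc n m, f s := by
  simpa [Nat.cast_sub h] using card_nsmul_le_sum (Ioc n m) f (f n)
    fun s hs ↦ hf (mem_Ioc.mp hs).1.le

/-- The running averages `F(n)/n` of a nondecreasing sequence are nondecreasing. -/
lemma mul_le_mul_of_monotone (hf : Monotone f) (h : n ≤ m) :
    (m : ℝ) * cumF f n ≤ n * cumF f m := by
  have hmn : (0 : ℝ) ≤ m - n := sub_nonneg.mpr (by exact_mod_cast h)
  have head := mul_le_mul_of_nonneg_left (le_mul_of_monotone hf n) hmn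
  have tail := mul_le_mul_of_nonneg_left (sub_mul_le_sum_Ioc_of_monotone hf h) n.cast_nonneg
  rw [← add_sum_Ioc f h]
  nlinarith

lemma le_mul_div_of_monotone (hf : Monotone f) (h : n ≤ m) :
    cumF f n ≤ n * (cumF f m / m) := by
  rcases m.eq_zero_or_pos with rfl | hm
  · simp [Nat.le_zero.mp h, cumF]
  · rw [mul_div_assoc', le_div_iff₀ (by exact_mod_cast hm), mul_comm]
    exact mul_le_mul_of_monotone hf h

end cumF

theorem stmt0_general (K T : ℕ) (hK : 0 < K)
    (f : Fin K → ℕ → ℝ)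
    (hfmono : ∀ j, Monotone (f j))
    (μ : Fin K → ℝ)
    (N : Fin K → ℕ) (hN : ∑ j, N j = T) :
    ∑ j, ((N j : ℝ) * μ j + cumF (f j) (N j))
      ≤ (T : ℝ) *
        Finset.univ.sup' ⟨⟨0, hK⟩, Finset.mem_univ _⟩
          (fun j => μ j + cumF (f j) T / T) := by
  set M := Finset.univ.sup' ⟨⟨0, hK⟩, Finset.mem_univ _⟩ (fun j => μ j + cumF (f j) T / T)
  have hNle (j : Fin K) : N j ≤ T := hN ▸ single_le_sum (fun i _ ↦ (N i).zero_le) (mem_univ j)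
  have arm_le (j : Fin K) : (N j : ℝ) * μ j + cumF (f j) (N j) ≤ N j * M :=
    calc (N j : ℝ) * μ j + cumF (f j) (N j)
        ≤ N j * μ j + N j * (cumF (f j) T / T) := by
          gcongr; exact cumF.le_mul_div_of_monotone (hfmono j) (hNle j)
      _ = N j * (μ j + cumF (f j) T / T) := by ring
      _ ≤ N j * M := by gcongr; exact le_sup' (fun j ↦ μ j + cumF (f j) T / T) (mem_univ j)
  calc ∑ j, ((N j : ℝ) * μ j + cumF (f j) (N j))
      ≤ ∑ j, (N j : ℝ) * M := sum_le_sum fun j _ ↦ arm_le j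
    _ = T * M := by rw [← sum_mul, ← Nat.cast_sum, hN]

/-- In the stochastic loyalty-points model with nondecreasing fidelity rewards,
the pseudo cumulative reward of any type `(N_1,…,N_K)` with `∑ N_j = T` is at most
`T · max_j (μ_j + F_j(T)/T)`, the reward of the best single-arm strategy. -/
theorem stmt0 (K T : ℕ) (hK : 0 < K) (hT : 0 < T)
    (f : Fin K → ℕ → ℝ)
    (hf0 : ∀ j n, 0 ≤ f j n) (hf1 : ∀ j n, f j n ≤ 1)
    (hfmono : ∀ j, Monotone (f j))
    (μ : Fin K → ℝ) (hμ0 : ∀ j, 0 ≤ μ j) (hμ1 : ∀ j, μ j ≤ 1)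
    (N : Fin K → ℕ) (hN : ∑ j, N j = T) :
    ∑ j, ((N j : ℝ) * μ j + cumF (f j) (N j))
      ≤ (T : ℝ) *
        Finset.univ.sup' ⟨⟨0, hK⟩, Finset.mem_univ _⟩
          (fun j => μ j + cumF (f j) T / T) :=
  stmt0_general K T hK f hfmono μ N hN
end

section
/- Let K ≥ 1 and T ≥ 1 be integers. For each j ∈ {1,…,K} let f_j : ℕ → [0,1] be nondecreasing, let F_j(n) = Σ_{s=1}^n f_j(s), and let μ_1,…,μ_K ∈ [0,1]. Fix any j* ∈ {1,…,K}. Then for every vector of counts N_1,…,N_K ∈ ℕ with Σ_{j=1}^K N_j = T, one has T·μ_{j*} + F_{j*}(T) − Σ_{j=1}^K (N_j·μ_j + F_j(N_j)) ≤ Σ_{j ≠ j*} N_j·(μ_{j*} − μ_j + f_{j*}(T) − f_j(0)). -/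
open Finset

theorem cumF_eq_sum_Ioc (f : ℕ → ℝ) (n : ℕ) : cumF f n = ∑ s ∈ Ioc 0 n, f s := by
  rw [cumF, ← Icc_add_one_left_eq_Ioc, zero_add]

theorem mul_le_cumF {f : ℕ → ℝ} (hf : Monotone f) (n : ℕ) : (n : ℝ) * f 0 ≤ cumF f n := by
  simpa [cumF, Nat.card_Icc] using card_nsmul_le_sum (Icc 1 n) f (f 0) fun s _ => hf s.zero_le

theorem cumF_sub_cumF_le {f : ℕ → ℝ} (hf : Monotone f) {m n : ℕ} (hmn : m ≤ n) :
    cumF f n - cumF f m ≤ ((n : ℝ) - m) * f n := by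
  rw [cumF_eq_sum_Ioc, cumF_eq_sum_Ioc, ← sum_Ioc_consecutive f m.zero_le hmn, add_sub_cancel_left,
    ← Nat.cast_sub hmn, ← Nat.card_Ioc, ← nsmul_eq_mul]
  exact sum_le_card_nsmul _ _ _ fun s hs => hf (mem_Ioc.mp hs).2

theorem stmt2_general (K T : ℕ)
    (f : Fin K → ℕ → ℝ)
    (hfmono : ∀ j, Monotone (f j))
    (μ : Fin K → ℝ)
    (jstar : Fin K)
    (N : Fin K → ℕ) (hN : ∑ j, N j = T) :
    (T : ℝ) * μ jstar + cumF (f jstar) T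
        - ∑ j, ((N j : ℝ) * μ j + cumF (f j) (N j))
      ≤ ∑ j ∈ Finset.univ.erase jstar,
          (N j : ℝ) * (μ jstar - μ j + f jstar T - f j 0) := by
  set S := univ.erase jstar
  have hN_split : (T : ℝ) = N jstar + ∑ j ∈ S, (N j : ℝ) := by
    rw [← hN, ← add_sum_erase _ N (mem_univ jstar)]
    push_cast
    rfl
  have hN_le : N jstar ≤ T := hN ▸ single_le_sum (fun j _ => (N j).zero_le) (mem_univ jstar)
  have hF_star : cumF (f jstar) T - cumF (f jstar) (N jstar) ≤ (∑ j ∈ S, (N j : ℝ)) * f jstar T := by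
    have := cumF_sub_cumF_le (hfmono jstar) hN_le
    rwa [hN_split, add_sub_cancel_left] at this
  have hF_other : ∑ j ∈ S, (N j : ℝ) * f j 0 ≤ ∑ j ∈ S, cumF (f j) (N j) :=
    sum_le_sum fun j _ => mul_le_cumF (hfmono j) _
  rw [← add_sum_erase _ _ (mem_univ jstar), hN_split]
  simp only [mul_add, mul_sub, sum_add_distrib, sum_sub_distrib, ← sum_mul] at hF_star ⊢
  linarith

/-- Regret decomposition for the loyalty-points model with nondecreasing fidelity rewards:
the pseudo-regret of a type `(N_1,…,N_K)` against the single-arm strategy on `j*` is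
at most `∑_{j ≠ j*} N_j (μ_{j*} − μ_j + f_{j*}(T) − f_j(0))`. -/
theorem stmt2 (K T : ℕ) (hK : 0 < K) (hT : 0 < T)
    (f : Fin K → ℕ → ℝ)
    (hf0 : ∀ j n, 0 ≤ f j n) (hf1 : ∀ j n, f j n ≤ 1)
    (hfmono : ∀ j, Monotone (f j))
    (μ : Fin K → ℝ) (hμ0 : ∀ j, 0 ≤ μ j) (hμ1 : ∀ j, μ j ≤ 1)
    (jstar : Fin K)
    (N : Fin K → ℕ) (hN : ∑ j, N j = T) :
    (T : ℝ) * μ jstar + cumF (f jstar) T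
        - ∑ j, ((N j : ℝ) * μ j + cumF (f j) (N j))
      ≤ ∑ j ∈ Finset.univ.erase jstar,
          (N j : ℝ) * (μ jstar - μ j + f jstar T - f j 0) :=
  stmt2_general K T f hfmono μ jstar N hN
end

section
/- Let T be a positive integer divisible by 8, let f : ℕ → [0,1] be nondecreasing, let F(n) = Σ_{s=1}^n f(s), and set δ = f(7T/8) − f(T/8). Let τ₁ and τ₂ be natural numbers with τ₁ ≤ T/2 and τ₂ ≤ T/2, and set τ = τ₁ + τ₂. Define R_I = T·δ/5 + F(T) − (τ·δ/5 + F(τ) + F(T−τ)) and R_II = T·δ/2 + F(T) − (τ·δ/5 + (T/2 − τ₂)·δ + F(τ) + F(T−τ)). Then max(R_I, R_II) ≥ T·δ/40. -/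
@[simp]
lemma cumF_zero (f : ℕ → ℝ) : cumF f 0 = 0 := by
  simp [cumF]

lemma cumF_succ (f : ℕ → ℝ) (n : ℕ) : cumF f (n + 1) = cumF f n + f (n + 1) :=
  Finset.sum_Icc_succ_top (by omega) f

lemma cumF_add_le_cumF_add {f : ℕ → ℝ} (hf : Monotone f) (a b : ℕ) :
    cumF f a + cumF f b ≤ cumF f (a + b) := by
  induction a with
  | zero => simp
  | succ a ih =>
    rw [Nat.add_right_comm, cumF_succ, cumF_succ]
    linarith [hf (by omega : a + 1 ≤ a + b + 1)]

lemma cumF_add_cumF_sub_le {f : ℕ → ℝ} (hf : Monotone f) {a n : ℕ} (h : a ≤ n) :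
    cumF f a + cumF f (n - a) ≤ cumF f n := by
  simpa [Nat.add_sub_cancel' h] using cumF_add_le_cumF_add hf a (n - a)

theorem stmt5_general (T : ℕ)
    (f : ℕ → ℝ) (hmono : Monotone f)
    (τ₁ τ₂ : ℕ) (h1 : τ₁ ≤ T / 2) (h2 : τ₂ ≤ T / 2) :
    let δ : ℝ := f (7 * T / 8) - f (T / 8)
    let τ : ℕ := τ₁ + τ₂
    let RI : ℝ := (T : ℝ) * δ / 5 + cumF f T
        - ((τ : ℝ) * δ / 5 + cumF f τ + cumF f (T - τ))
    let RII : ℝ := (T : ℝ) * δ / 2 + cumF f T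
        - ((τ : ℝ) * δ / 5 + ((T : ℝ) / 2 - (τ₂ : ℝ)) * δ + cumF f τ + cumF f (T - τ))
    (T : ℝ) * δ / 40 ≤ max RI RII := by
  intro δ τ RI RII
  have hδ : 0 ≤ δ := sub_nonneg.mpr (hmono (by omega))
  have hsuper : cumF f τ + cumF f (T - τ) ≤ cumF f T := cumF_add_cumF_sub_le hmono (by omega)
  have hτ₁ : (τ₁ : ℝ) * δ ≤ (T : ℝ) / 2 * δ := by
    refine mul_le_mul_of_nonneg_right ?_ hδ
    rw [le_div_iff₀ two_pos]
    exact_mod_cast (by omega : τ₁ * 2 ≤ T)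
  have hTδ : 0 ≤ (T : ℝ) * δ := mul_nonneg T.cast_nonneg hδ
  have hRI : RI = T * δ / 5 + cumF f T - ((τ₁ + τ₂) * δ / 5 + cumF f τ + cumF f (T - τ)) := by
    simp only [RI, τ, Nat.cast_add]
  have hRII : RII = T * δ / 2 + cumF f T
      - ((τ₁ + τ₂) * δ / 5 + (T / 2 - τ₂) * δ + cumF f τ + cumF f (T - τ)) := by
    simp only [RII, τ, Nat.cast_add]
  -- `max RI RII ≥ (4 RI + RII) / 5`, and these weights cancel the `τ₂ δ` terms.
  linarith [le_max_left RI RII, le_max_right RI RII]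

/-- Deterministic core of the linear lower bound for adversarial loyalty-points bandits
with increasing fidelity rewards: with `δ = f(7T/8) − f(T/8)`, for any `τ₁, τ₂ ≤ T/2`
the regret in one of the two reward environments is at least `Tδ/40`. -/
theorem stmt5 (T : ℕ) (hT : 0 < T) (h8 : 8 ∣ T)
    (f : ℕ → ℝ) (hf0 : ∀ n, 0 ≤ f n) (hf1 : ∀ n, f n ≤ 1) (hmono : Monotone f)
    (τ₁ τ₂ : ℕ) (h1 : τ₁ ≤ T / 2) (h2 : τ₂ ≤ T / 2) :
    let δ : ℝ := f (7 * T / 8) - f (T / 8)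
    let τ : ℕ := τ₁ + τ₂
    let RI : ℝ := (T : ℝ) * δ / 5 + cumF f T
        - ((τ : ℝ) * δ / 5 + cumF f τ + cumF f (T - τ))
    let RII : ℝ := (T : ℝ) * δ / 2 + cumF f T
        - ((τ : ℝ) * δ / 5 + ((T : ℝ) / 2 - (τ₂ : ℝ)) * δ + cumF f τ + cumF f (T - τ))
    (T : ℝ) * δ / 40 ≤ max RI RII :=
  stmt5_general T f hmono τ₁ τ₂ h1 h2
end

section
/- Let K ≥ 1 and M ≥ 1. Let p ∈ ℝ^M with p_i ≥ 0 and Σ_{i=1}^M p_i = 1, and for each i ∈ {1,…,M} let q^{(i)} ∈ ℝ^K with q^{(i)}_j ≥ 0 and Σ_{j=1}^K q^{(i)}_j = 1. Set q_j = Σ_{i=1}^M p_i q^{(i)}_j and assume q_j > 0 for all j. Let c_1,…,c_K ∈ [0,1] and h_1,…,h_M ∈ [0,1]. Then Σ_{j=1}^K q_j · Σ_{i=1}^M p_i · (q^{(i)}_j · c_j / q_j − h_i)² ≤ 2(K+1). -/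
/-!
Write `a_ij = q^{(i)}_j c_j / q_j ≥ 0`. Since `h_i ∈ [0,1]`, `(a_ij - h_i)² ≤ a_ij² + 1`. For each arm,
`q_j ∑_i p_i a_ij² = ∑_i p_i (q^{(i)}_j c_j)² / q_j ≤ ∑_i p_i q^{(i)}_j / q_j = 1`, because
`q^{(i)}_j c_j ∈ [0, q^{(i)}_j]` and `q^{(i)}_j ≤ 1`. Summing over arms, and using `∑_j q_j = 1` for the
`+ 1` terms, the second moment is at most `K + 1`.
-/

section ImportanceWeighting

variable {ι κ : Type*} [Fintype ι] [Fintype κ]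

theorem sum_sum_mul_eq_one_of_sum_eq_one (p : ι → ℝ) (w : ι → κ → ℝ) (hp : ∑ i, p i = 1)
    (hw : ∀ i, ∑ j, w i j = 1) : ∑ j, ∑ i, p i * w i j = 1 := by
  rw [Finset.sum_comm]
  simp only [← Finset.mul_sum, hw, mul_one, hp]

theorem sub_sq_le_sq_add_one {a b : ℝ} (ha : 0 ≤ a) (hb : b ∈ Set.Icc (0 : ℝ) 1) :
    (a - b) ^ 2 ≤ a ^ 2 + 1 := by
  nlinarith [hb.1, hb.2]

/-- With `Q = 0` the left-hand side is `0` because of the junk value `x / 0 = 0`. -/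
theorem mul_sum_mul_div_sq_le_one (p w : ι → ℝ) (hp : ∀ i, 0 ≤ p i)
    (hw : ∀ i, w i ∈ Set.Icc (0 : ℝ) 1) {c : ℝ} (hc : c ∈ Set.Icc (0 : ℝ) 1) :
    (∑ i, p i * w i) * ∑ i, p i * (w i * c / ∑ i, p i * w i) ^ 2 ≤ 1 := by
  set Q := ∑ i, p i * w i
  rcases (Finset.sum_nonneg fun i _ => mul_nonneg (hp i) (hw i).1 : 0 ≤ Q).eq_or_lt with hQ | hQ
  · rw [show Q = 0 from hQ.symm]; simp
  have hwc : ∀ i, (w i * c) ^ 2 ≤ w i := fun i => by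
    have h0 : 0 ≤ w i * c := mul_nonneg (hw i).1 hc.1
    have h1 : w i * c ≤ w i := mul_le_of_le_one_right (hw i).1 hc.2
    nlinarith [(hw i).2]
  calc Q * ∑ i, p i * (w i * c / Q) ^ 2 = (∑ i, p i * (w i * c) ^ 2) / Q := by
        rw [Finset.mul_sum, Finset.sum_div]
        refine Finset.sum_congr rfl fun i _ => ?_
        field_simp
    _ ≤ Q / Q := by
        gcongr ?_ / Q
        exact Finset.sum_le_sum fun i _ => mul_le_mul_of_nonneg_left (hwc i) (hp i)
    _ = 1 := div_self hQ.ne'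

theorem mul_sum_mul_div_sub_sq_le (p w h : ι → ℝ) (hp : ∀ i, 0 ≤ p i) (hp1 : ∑ i, p i = 1)
    (hw : ∀ i, w i ∈ Set.Icc (0 : ℝ) 1) {c : ℝ} (hc : c ∈ Set.Icc (0 : ℝ) 1)
    (hh : ∀ i, h i ∈ Set.Icc (0 : ℝ) 1) :
    (∑ i, p i * w i) * ∑ i, p i * (w i * c / ∑ i, p i * w i - h i) ^ 2
      ≤ 1 + ∑ i, p i * w i := by
  set Q := ∑ i, p i * w i
  have hQ : 0 ≤ Q := Finset.sum_nonneg fun i _ => mul_nonneg (hp i) (hw i).1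
  have hsq : ∀ i, (w i * c / Q - h i) ^ 2 ≤ (w i * c / Q) ^ 2 + 1 := fun i =>
    sub_sq_le_sq_add_one (div_nonneg (mul_nonneg (hw i).1 hc.1) hQ) (hh i)
  calc Q * ∑ i, p i * (w i * c / Q - h i) ^ 2
      ≤ Q * ∑ i, p i * ((w i * c / Q) ^ 2 + 1) := by
        gcongr with i
        exacts [hp i, hsq i]
    _ = Q * ∑ i, p i * (w i * c / Q) ^ 2 + Q := by
        simp only [mul_add, mul_one, Finset.sum_add_distrib, hp1]
    _ ≤ 1 + Q := by linarith [mul_sum_mul_div_sq_le_one p w hp hw hc]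

theorem sum_mul_sum_importance_weighted_sq_le (p : ι → ℝ) (hp0 : ∀ i, 0 ≤ p i)
    (hp1 : ∑ i, p i = 1) (w : ι → κ → ℝ) (hw0 : ∀ i j, 0 ≤ w i j) (hw1 : ∀ i, ∑ j, w i j = 1)
    (c : κ → ℝ) (hc : ∀ j, c j ∈ Set.Icc (0 : ℝ) 1) (h : ι → ℝ)
    (hh : ∀ i, h i ∈ Set.Icc (0 : ℝ) 1) :
    ∑ j, (∑ i, p i * w i j) * ∑ i, p i * (w i j * c j / ∑ i, p i * w i j - h i) ^ 2
      ≤ Fintype.card κ + 1 := by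
  have hw : ∀ i j, w i j ∈ Set.Icc (0 : ℝ) 1 := fun i j =>
    ⟨hw0 i j, (Finset.single_le_sum (fun j _ => hw0 i j) (Finset.mem_univ j)).trans (hw1 i).le⟩
  calc _ ≤ ∑ j, (1 + ∑ i, p i * w i j) := Finset.sum_le_sum fun j _ =>
        mul_sum_mul_div_sub_sq_le p (w · j) h hp0 hp1 (hw · j) (hc j) hh
    _ = Fintype.card κ + 1 := by
        rw [Finset.sum_add_distrib, sum_sum_mul_eq_one_of_sum_eq_one p w hp1 hw1]
        simp

end ImportanceWeighting

theorem stmt10_general (K M : ℕ)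
    (p : Fin M → ℝ) (hp0 : ∀ i, 0 ≤ p i) (hp1 : ∑ i, p i = 1)
    (q' : Fin M → Fin K → ℝ)
    (hq'0 : ∀ i j, 0 ≤ q' i j) (hq'1 : ∀ i, ∑ j, q' i j = 1)
    (c : Fin K → ℝ) (hc : ∀ j, c j ∈ Set.Icc (0 : ℝ) 1)
    (h : Fin M → ℝ) (hh : ∀ i, h i ∈ Set.Icc (0 : ℝ) 1)
    (q : Fin K → ℝ) (hq : ∀ j, q j = ∑ i, p i * q' i j) :
    ∑ j, q j * ∑ i, p i * (q' i j * c j / q j - h i) ^ 2 ≤ 2 * (K + 1) := by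
  obtain rfl : q = fun j => ∑ i, p i * q' i j := funext hq
  have hbound := sum_mul_sum_importance_weighted_sq_le p hp0 hp1 q' hq'0 hq'1 c hc h hh
  rw [Fintype.card_fin] at hbound
  linarith [(K.cast_nonneg : (0 : ℝ) ≤ K)]

/-- Second-moment bound for the importance-weighted loss estimates in the EXP4-type
algorithm: `∑_j q_j ∑_i p_i (q^{(i)}_j c_j / q_j − h_i)² ≤ 2(K+1)`. -/
theorem stmt10 (K M : ℕ) (hK : 0 < K) (hM : 0 < M)
    (p : Fin M → ℝ) (hp0 : ∀ i, 0 ≤ p i) (hp1 : ∑ i, p i = 1)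
    (q' : Fin M → Fin K → ℝ)
    (hq'0 : ∀ i j, 0 ≤ q' i j) (hq'1 : ∀ i, ∑ j, q' i j = 1)
    (c : Fin K → ℝ) (hc : ∀ j, c j ∈ Set.Icc (0 : ℝ) 1)
    (h : Fin M → ℝ) (hh : ∀ i, h i ∈ Set.Icc (0 : ℝ) 1)
    (q : Fin K → ℝ) (hq : ∀ j, q j = ∑ i, p i * q' i j) (hqpos : ∀ j, 0 < q j) :
    ∑ j, q j * ∑ i, p i * (q' i j * c j / q j - h i) ^ 2 ≤ 2 * (K + 1) :=
  stmt10_general K M p hp0 hp1 q' hq'0 hq'1 c hc h hh q hq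
end

section
/- Let K ≥ 1, let μ_1,…,μ_K ∈ [0,1], let r_1,…,r_K ∈ [0,1], let ρ_1,…,ρ_K be positive integers, and define σ(μ, N) = Σ_{j=1}^K (μ_j·N_j + r_j·⌊N_j/ρ_j⌋). Let ρ̄ = lcm(ρ_1,…,ρ_K). If ρ̄ divides T, then max over N ∈ ℕ^K with Σ_j N_j = T of σ(μ, N) equals T · max_{1≤j≤K} (μ_j + r_j/ρ_j), and the maximum is attained by a single-arm type, i.e., a type with N_{j*} = T for some j* and N_j = 0 for j ≠ j*. -/
/-- Total expected reward `σ(μ, N) = ∑_j (μ_j N_j + r_j ⌊N_j/ρ_j⌋)` of a type `N`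
in the loyalty-points model with coupon rewards. -/
noncomputable def sigmaCoupon {K : ℕ} (μ r : Fin K → ℝ) (ρ : Fin K → ℕ)
    (N : Fin K → ℕ) : ℝ :=
  ∑ j, (μ j * (N j : ℝ) + r j * ((N j / ρ j : ℕ) : ℝ))

/-!
Since `⌊N_j/ρ_j⌋ ≤ N_j/ρ_j`, the reward `σ(μ, N)` is bounded by the linear form
`∑_j N_j (μ_j + r_j/ρ_j)`, which is at most `T · max_j (μ_j + r_j/ρ_j)` on types of size `T`.
If `ρ_j ∣ T`, the floor is exact for the single-arm type playing a maximizing arm `T` times,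
so the bound is attained.
-/

theorem sigmaCoupon_le_sum_mul {K : ℕ} (μ r : Fin K → ℝ) (hr : ∀ j, 0 ≤ r j)
    (ρ N : Fin K → ℕ) :
    sigmaCoupon μ r ρ N ≤ ∑ j, (N j : ℝ) * (μ j + r j / ρ j) := by
  unfold sigmaCoupon
  gcongr with j
  calc μ j * N j + r j * ((N j / ρ j : ℕ) : ℝ) ≤ μ j * N j + r j * (N j / ρ j) := by
        gcongr
        exacts [hr j, Nat.cast_div_le]
    _ = N j * (μ j + r j / ρ j) := by ring

theorem sigmaCoupon_single_arm {K : ℕ} (μ r : Fin K → ℝ) (ρ : Fin K → ℕ) {T : ℕ} {i : Fin K}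
    (hi : ρ i ∣ T) :
    sigmaCoupon μ r ρ (fun j => if j = i then T else 0) = T * (μ i + r i / ρ i) := by
  rw [sigmaCoupon, Finset.sum_eq_single i (fun j _ hj => by simp [hj]) (by simp)]
  simp only [↓reduceIte, Nat.cast_div_charZero hi]
  ring

theorem stmt12_general (K : ℕ) (hK : 0 < K)
    (μ r : Fin K → ℝ)
    (hr : ∀ j, r j ∈ Set.Icc (0 : ℝ) 1)
    (ρ : Fin K → ℕ)
    (T : ℕ) (hdvd : Finset.univ.lcm ρ ∣ T) :
    (∀ N : Fin K → ℕ, ∑ j, N j = T →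
        sigmaCoupon μ r ρ N
          ≤ (T : ℝ) * Finset.univ.sup' ⟨⟨0, hK⟩, Finset.mem_univ _⟩
              (fun j => μ j + r j / (ρ j : ℝ)))
    ∧ ∃ jstar : Fin K,
        sigmaCoupon μ r ρ (fun j => if j = jstar then T else 0)
          = (T : ℝ) * Finset.univ.sup' ⟨⟨0, hK⟩, Finset.mem_univ _⟩
              (fun j => μ j + r j / (ρ j : ℝ)) := by
  set M := Finset.univ.sup' ⟨⟨0, hK⟩, Finset.mem_univ _⟩ fun j => μ j + r j / (ρ j : ℝ)
  refine ⟨fun N hN => ?_, ?_⟩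
  · calc sigmaCoupon μ r ρ N ≤ ∑ j, (N j : ℝ) * (μ j + r j / ρ j) :=
          sigmaCoupon_le_sum_mul μ r (fun j => (hr j).1) ρ N
      _ ≤ ∑ j, (N j : ℝ) * M := by
          gcongr with j
          exact Finset.le_sup' (fun j => μ j + r j / (ρ j : ℝ)) (Finset.mem_univ j)
      _ = T * M := by rw [← Finset.sum_mul, ← Nat.cast_sum, hN]
  · obtain ⟨i, -, hi⟩ := Finset.exists_mem_eq_sup' ⟨⟨0, hK⟩, Finset.mem_univ _⟩
      fun j => μ j + r j / (ρ j : ℝ)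
    refine ⟨i, ?_⟩
    rw [sigmaCoupon_single_arm μ r ρ ((Finset.dvd_lcm (Finset.mem_univ i)).trans hdvd), ← hi]

/-- If the least common multiple `ρ̄` of the period lengths divides `T`, then the maximum
of `σ(μ, ·)` over types of total size `T` equals `T · max_j (μ_j + r_j/ρ_j)` and is
attained by a single-arm type. -/
theorem stmt12 (K : ℕ) (hK : 0 < K)
    (μ r : Fin K → ℝ)
    (hμ : ∀ j, μ j ∈ Set.Icc (0 : ℝ) 1) (hr : ∀ j, r j ∈ Set.Icc (0 : ℝ) 1)
    (ρ : Fin K → ℕ) (hρ : ∀ j, 0 < ρ j)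
    (T : ℕ) (hT : 1 ≤ T) (hdvd : Finset.univ.lcm ρ ∣ T) :
    (∀ N : Fin K → ℕ, ∑ j, N j = T →
        sigmaCoupon μ r ρ N
          ≤ (T : ℝ) * Finset.univ.sup' ⟨⟨0, hK⟩, Finset.mem_univ _⟩
              (fun j => μ j + r j / (ρ j : ℝ)))
    ∧ ∃ jstar : Fin K,
        sigmaCoupon μ r ρ (fun j => if j = jstar then T else 0)
          = (T : ℝ) * Finset.univ.sup' ⟨⟨0, hK⟩, Finset.mem_univ _⟩
              (fun j => μ j + r j / (ρ j : ℝ)) :=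
  stmt12_general K hK μ r hr ρ T hdvd
end

section
/- Let K ≥ 1, T ≥ 1, let μ_1,…,μ_K ∈ [0,1], let r_1,…,r_K ∈ [0,1], let ρ_1,…,ρ_K be positive integers, and define σ(μ, N) = Σ_{j=1}^K (μ_j·N_j + r_j·⌊N_j/ρ_j⌋). Then the value of the best type exceeds the value of the best single-arm type by at most max_j r_j: max over N ∈ ℕ^K with Σ_j N_j = T of σ(μ, N) ≤ max_{1≤j≤K} (T·μ_j + r_j·⌊T/ρ_j⌋) + max_{1≤j≤K} r_j. -/
open Finset

theorem Nat.cast_div_lt_div_add_one {α : Type*} [Semifield α] [LinearOrder α]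
    [IsStrictOrderedRing α] [FloorSemiring α] (m n : ℕ) :
    (m : α) / n < ((m / n : ℕ) : α) + 1 := by
  simpa only [Nat.floor_div_eq_div] using Nat.lt_floor_add_one ((m : α) / n)

section Coupon

variable {K : ℕ} (μ r : Fin K → ℝ) (ρ : Fin K → ℕ)

/- At `ρ j = 0` the junk values `N / 0 = 0` (coupons) and `r j / 0 = 0` (rate share) agree. -/
noncomputable def couponRate (j : Fin K) : ℝ :=
  μ j + r j / ρ j

variable {μ r ρ}

theorem sigmaCoupon_le_sum_mul_couponRate (hr : ∀ j, 0 ≤ r j) (N : Fin K → ℕ) :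
    sigmaCoupon μ r ρ N ≤ ∑ j, (N j : ℝ) * couponRate μ r ρ j := by
  refine sum_le_sum fun j _ => ?_
  have hbonus : r j * ((N j / ρ j : ℕ) : ℝ) ≤ r j * ((N j : ℝ) / ρ j) :=
    mul_le_mul_of_nonneg_left Nat.cast_div_le (hr j)
  calc μ j * N j + r j * ((N j / ρ j : ℕ) : ℝ)
      ≤ μ j * N j + r j * ((N j : ℝ) / ρ j) := add_le_add_right hbonus _
    _ = N j * couponRate μ r ρ j := by rw [couponRate]; ring

theorem natCast_mul_couponRate_le {j : Fin K} (hr : 0 ≤ r j) (T : ℕ) :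
    (T : ℝ) * couponRate μ r ρ j ≤ T * μ j + r j * ((T / ρ j : ℕ) : ℝ) + r j := by
  have hbonus : r j * ((T : ℝ) / ρ j) ≤ r j * (((T / ρ j : ℕ) : ℝ) + 1) :=
    mul_le_mul_of_nonneg_left (Nat.cast_div_lt_div_add_one T (ρ j)).le hr
  calc (T : ℝ) * couponRate μ r ρ j = T * μ j + r j * ((T : ℝ) / ρ j) := by
        rw [couponRate]; ring
    _ ≤ T * μ j + r j * (((T / ρ j : ℕ) : ℝ) + 1) := add_le_add_right hbonus _
    _ = T * μ j + r j * ((T / ρ j : ℕ) : ℝ) + r j := by ring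

end Coupon

theorem stmt13_general (K : ℕ) (hK : 0 < K)
    (T : ℕ)
    (μ r : Fin K → ℝ)
    (hr : ∀ j, r j ∈ Set.Icc (0 : ℝ) 1)
    (ρ : Fin K → ℕ) :
    ∀ N : Fin K → ℕ, ∑ j, N j = T →
      sigmaCoupon μ r ρ N
        ≤ Finset.univ.sup' ⟨⟨0, hK⟩, Finset.mem_univ _⟩
            (fun j => (T : ℝ) * μ j + r j * ((T / ρ j : ℕ) : ℝ))
          + Finset.univ.sup' ⟨⟨0, hK⟩, Finset.mem_univ _⟩ (fun j => r j) := by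
  intro N hN
  have hr₀ : ∀ j, 0 ≤ r j := fun j => (hr j).1
  obtain ⟨j₀, -, hj₀⟩ :=
    exists_max_image univ (couponRate μ r ρ) ⟨⟨0, hK⟩, mem_univ _⟩
  calc sigmaCoupon μ r ρ N
      ≤ ∑ j, (N j : ℝ) * couponRate μ r ρ j := sigmaCoupon_le_sum_mul_couponRate hr₀ N
    _ ≤ ∑ j, (N j : ℝ) * couponRate μ r ρ j₀ :=
        sum_le_sum fun j _ => mul_le_mul_of_nonneg_left (hj₀ j (mem_univ j)) (Nat.cast_nonneg _)
    _ = T * couponRate μ r ρ j₀ := by rw [← sum_mul, ← Nat.cast_sum, hN]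
    _ ≤ T * μ j₀ + r j₀ * ((T / ρ j₀ : ℕ) : ℝ) + r j₀ := natCast_mul_couponRate_le (hr₀ j₀) T
    _ ≤ _ := add_le_add
        (le_sup' (fun j => (T : ℝ) * μ j + r j * ((T / ρ j : ℕ) : ℝ)) (mem_univ j₀))
        (le_sup' (fun j => r j) (mem_univ j₀))

/-- In the loyalty-points model with coupon rewards, the value of the best type of total
size `T` exceeds the value of the best single-arm type by at most `max_j r_j`. -/
theorem stmt13 (K : ℕ) (hK : 0 < K)
    (T : ℕ) (hT : 1 ≤ T)
    (μ r : Fin K → ℝ)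
    (hμ : ∀ j, μ j ∈ Set.Icc (0 : ℝ) 1) (hr : ∀ j, r j ∈ Set.Icc (0 : ℝ) 1)
    (ρ : Fin K → ℕ) (hρ : ∀ j, 0 < ρ j) :
    ∀ N : Fin K → ℕ, ∑ j, N j = T →
      sigmaCoupon μ r ρ N
        ≤ Finset.univ.sup' ⟨⟨0, hK⟩, Finset.mem_univ _⟩
            (fun j => (T : ℝ) * μ j + r j * ((T / ρ j : ℕ) : ℝ))
          + Finset.univ.sup' ⟨⟨0, hK⟩, Finset.mem_univ _⟩ (fun j => r j) :=
  stmt13_general K hK T μ r hr ρ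
end

section
/- Let T ≥ 1, m ≥ 1 and 0 ≤ t₀ ≤ T be integers, let μ_i, μ_k ∈ [0,1], let f_i, f_k : ℕ → [0,1], and let F_i(n) = Σ_{s=1}^n f_i(s), F_k(n) = Σ_{s=1}^n f_k(s). Define W_T(μ_i, μ_k, m) = (T − ⌊T/(m+1)⌋)·μ_i + ⌊T/(m+1)⌋·μ_k + ⌊T/(m+1)⌋·(F_i(m) + F_k(1)) + F_i(T − (m+1)·⌊T/(m+1)⌋). Then W_{T−t₀}(μ_i, μ_k, m) ≥ W_T(μ_i, μ_k, m) − 2·t₀. -/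
/-- Expected total reward over horizon `T` of the periodic strategy that repeatedly plays
arm `i` for `m` consecutive steps and then arm `k` once, with mean base rewards
`μi, μk` and cumulative fidelity rewards `Fi, Fk`. -/
noncomputable def Wreward (T m : ℕ) (μi μk : ℝ) (Fi Fk : ℕ → ℝ) : ℝ :=
  ((T : ℝ) - ((T / (m + 1) : ℕ) : ℝ)) * μi + ((T / (m + 1) : ℕ) : ℝ) * μk
    + ((T / (m + 1) : ℕ) : ℝ) * (Fi m + Fk 1)
    + Fi (T - (m + 1) * (T / (m + 1)))

lemma Wreward_succ_sub (n m : ℕ) (μi μk : ℝ) (fi fk : ℕ → ℝ) :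
    Wreward (n + 1) m μi μk (cumF fi) (cumF fk) - Wreward n m μi μk (cumF fi) (cumF fk)
      = if (m + 1) ∣ (n + 1) then μk + fk 1 else μi + fi (n % (m + 1) + 1) := by
  simp only [Wreward, ← Nat.mod_eq_sub_mul_div]
  have hdiv_n := Nat.mod_add_div n (m + 1)
  have hdiv_succ := Nat.mod_add_div (n + 1) (m + 1)
  split_ifs with h
  · have hq : (n + 1) / (m + 1) = n / (m + 1) + 1 := Nat.succ_div_of_dvd h
    have hr_succ : (n + 1) % (m + 1) = 0 := Nat.mod_eq_zero_of_dvd h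
    have hr : n % (m + 1) = m := by rw [hq, Nat.mul_add] at hdiv_succ; omega
    have hfk : cumF fk 1 = fk 1 := by simp [cumF_succ]
    rw [hq, hr_succ, hr, cumF_zero, hfk]
    push_cast
    ring
  · have hq : (n + 1) / (m + 1) = n / (m + 1) := by rw [Nat.succ_div, if_neg h, add_zero]
    have hr : (n + 1) % (m + 1) = n % (m + 1) + 1 := by rw [hq] at hdiv_succ; omega
    rw [hq, hr, cumF_succ fi]
    push_cast
    ring

lemma Wreward_succ_le (n m : ℕ) {μi μk : ℝ} (hμi : μi ≤ 1) (hμk : μk ≤ 1) {fi fk : ℕ → ℝ}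
    (hfi : ∀ s, fi s ≤ 1) (hfk : ∀ s, fk s ≤ 1) :
    Wreward (n + 1) m μi μk (cumF fi) (cumF fk) ≤ Wreward n m μi μk (cumF fi) (cumF fk) + 2 := by
  have hstep := Wreward_succ_sub n m μi μk fi fk
  split_ifs at hstep
  · linarith [hfk 1]
  · linarith [hfi (n % (m + 1) + 1)]

lemma antitone_Wreward_sub_two_mul (m : ℕ) {μi μk : ℝ} (hμi : μi ≤ 1) (hμk : μk ≤ 1)
    {fi fk : ℕ → ℝ} (hfi : ∀ s, fi s ≤ 1) (hfk : ∀ s, fk s ≤ 1) :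
    Antitone fun n : ℕ ↦ Wreward n m μi μk (cumF fi) (cumF fk) - 2 * n :=
  antitone_nat_of_succ_le fun n ↦ by
    have := Wreward_succ_le n m hμi hμk hfi hfk
    push_cast
    linarith

theorem stmt16_general (T m t₀ : ℕ) (ht₀ : t₀ ≤ T)
    (μi μk : ℝ) (hμi : μi ∈ Set.Icc (0 : ℝ) 1) (hμk : μk ∈ Set.Icc (0 : ℝ) 1)
    (fi fk : ℕ → ℝ)
    (hfi : ∀ n, fi n ∈ Set.Icc (0 : ℝ) 1) (hfk : ∀ n, fk n ∈ Set.Icc (0 : ℝ) 1) :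
    Wreward T m μi μk (cumF fi) (cumF fk) - 2 * (t₀ : ℝ)
      ≤ Wreward (T - t₀) m μi μk (cumF fi) (cumF fk) := by
  have h := antitone_Wreward_sub_two_mul m hμi.2 hμk.2 (fun s ↦ (hfi s).2) (fun s ↦ (hfk s).2)
    (Nat.sub_le T t₀)
  simp only [Nat.cast_sub ht₀] at h
  linarith

/-- Prefix bound: committing to the periodic strategy only during the last `T − t₀` rounds
costs at most `2 t₀` in total reward: `W_{T−t₀}(μ_i, μ_k, m) ≥ W_T(μ_i, μ_k, m) − 2 t₀`. -/
theorem stmt16 (T m t₀ : ℕ) (hT : 1 ≤ T) (hm : 1 ≤ m) (ht₀ : t₀ ≤ T)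
    (μi μk : ℝ) (hμi : μi ∈ Set.Icc (0 : ℝ) 1) (hμk : μk ∈ Set.Icc (0 : ℝ) 1)
    (fi fk : ℕ → ℝ)
    (hfi : ∀ n, fi n ∈ Set.Icc (0 : ℝ) 1) (hfk : ∀ n, fk n ∈ Set.Icc (0 : ℝ) 1) :
    Wreward T m μi μk (cumF fi) (cumF fk) - 2 * (t₀ : ℝ)
      ≤ Wreward (T - t₀) m μi μk (cumF fi) (cumF fk) :=
  stmt16_general T m t₀ ht₀ μi μk hμi hμk fi fk hfi hfk
end

section
/- Let K ≥ 1 and T ≥ 1. For each j ∈ {1,…,K} let f_j : ℕ → [0,1] be nondecreasing with f_j(0) = 0, let F_j(n) = Σ_{s=1}^n f_j(s), and let μ_j ∈ [0,1]. Suppose for each arm j we are given positive integers l_{j,1},…,l_{j,r_j} (the run lengths of arm j; possibly r_j = 0), and set N_j = Σ_{i=1}^{r_j} l_{j,i}, with Σ_{j=1}^K N_j = T. Then Σ_{j=1}^K ( μ_j·N_j + Σ_{i=1}^{r_j} Σ_{q=0}^{l_{j,i} − 1} f_j(q) ) ≤ T · max_{1≤j≤K} (μ_j + F_j(T)/T).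 In particular, in the stochastic subscription model with increasing fidelity rewards, a single-arm strategy maximizes the expected total reward. -/
/-!
For a nondecreasing `f`, the averages `(1/l) ∑_{q<l} f q` of its initial segments grow with `l`,
and `∑_{q<T} f q ≤ F(T)`. Hence a run of length `l ≤ T` earns at most `l · F(T)/T` fidelity
reward, so arm `j` earns at most `N_j (μ_j + F_j(T)/T)` in total; summing over the arms with
`∑_j N_j = T` bounds everything by `T · max_j (μ_j + F_j(T)/T)`.
-/

open Finset

theorem cumF_eq_sum_range_succ (f : ℕ → ℝ) (n : ℕ) :
    cumF f n = ∑ q ∈ range n, f (q + 1) := by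
  rw [cumF, range_eq_Ico, sum_Ico_add' f, zero_add, Ico_add_one_right_eq_Icc]

theorem sum_range_le_cumF {f : ℕ → ℝ} (hf : Monotone f) (n : ℕ) :
    ∑ q ∈ range n, f q ≤ cumF f n := by
  rw [cumF_eq_sum_range_succ]
  exact sum_le_sum fun q _ => hf q.le_succ

theorem Monotone.mul_sum_range_le {f : ℕ → ℝ} (hf : Monotone f) {l n : ℕ} (hln : l ≤ n) :
    (n : ℝ) * ∑ q ∈ range l, f q ≤ l * ∑ q ∈ range n, f q := by
  induction n, hln using Nat.le_induction with
  | base => rw [mul_comm]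
  | succ n hln ih =>
    have hle : ∑ q ∈ range l, f q ≤ l * f n := by
      simpa using sum_le_sum fun q hq => hf ((mem_range.1 hq).le.trans hln)
    rw [sum_range_succ, Nat.cast_succ]
    linarith

theorem sum_range_le_mul_cumF_div {f : ℕ → ℝ} (hf : Monotone f) {l n : ℕ} (hln : l ≤ n) :
    ∑ q ∈ range l, f q ≤ l * (cumF f n / n) := by
  rcases n.eq_zero_or_pos with rfl | hn
  · simp [Nat.le_zero.1 hln]
  · rw [← mul_div_assoc, le_div_iff₀ (by positivity), mul_comm]
    exact (hf.mul_sum_range_le hln).trans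
      (mul_le_mul_of_nonneg_left (sum_range_le_cumF hf n) (Nat.cast_nonneg l))

theorem sum_runs_le_mul_cumF_div {ι : Type*} {f : ℕ → ℝ} (hf : Monotone f) (s : Finset ι)
    (l : ι → ℕ) {n : ℕ} (hl : ∑ i ∈ s, l i ≤ n) :
    ∑ i ∈ s, ∑ q ∈ range (l i), f q ≤ (∑ i ∈ s, l i : ℕ) * (cumF f n / n) := by
  rw [Nat.cast_sum, sum_mul]
  exact sum_le_sum fun i hi =>
    sum_range_le_mul_cumF_div hf ((single_le_sum (fun _ _ => Nat.zero_le _) hi).trans hl)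

theorem stmt18_general (K T : ℕ) (hK : 0 < K)
    (f : Fin K → ℕ → ℝ)
    (hfmono : ∀ j, Monotone (f j))
    (μ : Fin K → ℝ)
    (r : Fin K → ℕ) (l : (j : Fin K) → Fin (r j) → ℕ)
    (N : Fin K → ℕ) (hNdef : ∀ j, N j = ∑ i, l j i) (hN : ∑ j, N j = T) :
    ∑ j, (μ j * (N j : ℝ) + ∑ i, ∑ q ∈ Finset.range (l j i), f j q)
      ≤ (T : ℝ) *
        Finset.univ.sup' ⟨⟨0, hK⟩, Finset.mem_univ _⟩
          (fun j => μ j + cumF (f j) T / T) := by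
  set g := fun j => μ j + cumF (f j) T / T
  have hNT : ∀ j, N j ≤ T := fun j =>
    hN ▸ single_le_sum (fun _ _ => Nat.zero_le _) (mem_univ j)
  calc ∑ j, (μ j * (N j : ℝ) + ∑ i, ∑ q ∈ range (l j i), f j q)
      ≤ ∑ j, (N j : ℝ) * g j := sum_le_sum fun j _ => by
        have hruns := sum_runs_le_mul_cumF_div (hfmono j) univ (l j) (hNdef j ▸ hNT j)
        rw [← hNdef j] at hruns
        linarith
    _ ≤ ∑ j, (N j : ℝ) * univ.sup' ⟨⟨0, hK⟩, mem_univ _⟩ g :=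
        sum_le_sum fun j _ =>
          mul_le_mul_of_nonneg_left (le_sup' g (mem_univ j)) (Nat.cast_nonneg _)
    _ = T * univ.sup' ⟨⟨0, hK⟩, mem_univ _⟩ g := by rw [← sum_mul, ← hN, Nat.cast_sum]

/-- In the stochastic subscription model with nondecreasing fidelity rewards
(`f_j(0) = 0`), the expected total reward of any strategy, decomposed into runs of
lengths `l_{j,1},…,l_{j,r_j}` for each arm `j` with `N_j = ∑_i l_{j,i}` and
`∑_j N_j = T`, is at most `T · max_j (μ_j + F_j(T)/T)`, the expected total reward
of the best single-arm strategy. -/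
theorem stmt18 (K T : ℕ) (hK : 0 < K) (hT : 0 < T)
    (f : Fin K → ℕ → ℝ)
    (hf0 : ∀ j n, 0 ≤ f j n) (hf1 : ∀ j n, f j n ≤ 1)
    (hfmono : ∀ j, Monotone (f j)) (hfz : ∀ j, f j 0 = 0)
    (μ : Fin K → ℝ) (hμ : ∀ j, μ j ∈ Set.Icc (0 : ℝ) 1)
    (r : Fin K → ℕ) (l : (j : Fin K) → Fin (r j) → ℕ)
    (hl : ∀ j i, 0 < l j i)
    (N : Fin K → ℕ) (hNdef : ∀ j, N j = ∑ i, l j i) (hN : ∑ j, N j = T) :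
    ∑ j, (μ j * (N j : ℝ) + ∑ i, ∑ q ∈ Finset.range (l j i), f j q)
      ≤ (T : ℝ) *
        Finset.univ.sup' ⟨⟨0, hK⟩, Finset.mem_univ _⟩
          (fun j => μ j + cumF (f j) T / T) :=
  stmt18_general K T hK f hfmono μ r l N hNdef hN
end
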